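/- arXiv:1804.09455 — 4 statements merged into one kernel-verified Lean document; each statement's English description precedes it below -/
import Mathlib

section
/- Let f_d = Σ_{i=1}^m c_i x^{α_i} − d·x^β ∈ ℝ[x_1,…,x_n] with α_i ∈ (2ℕ)^n and c_i > 0 for i = 1,…,m, and suppose β lies on the boundary ∂New(f_d) of the Newton polytope of f_d. Let F be the face of New(f_d) containing β. Then f_d is nonnegative on ℝ^n if and only if the restriction of f_d to the face F (i.e. the sum of those terms of f_d whose exponents lie in F) is nonnegative on ℝ^n. -/
open MvPolynomial Classical

noncomputable section

/-- The real point associated to an exponent vector. -/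
def toR {n : ℕ} (α : Fin n →₀ ℕ) : Fin n → ℝ := fun j => (α j : ℝ)

/-- A lattice point is even if all its coordinates are even, i.e. it lies in `(2ℕ)^n`. -/
def IsEvenPt {n : ℕ} (α : Fin n →₀ ℕ) : Prop := ∀ j, Even (α j)

/-- The Newton polytope of a polynomial: the convex hull of its support. -/
def newton {n : ℕ} (f : MvPolynomial (Fin n) ℝ) : Set (Fin n → ℝ) :=
  convexHull ℝ (toR '' (f.support : Set (Fin n →₀ ℕ)))

/-- A polynomial is nonnegative (PSD) if it is nonnegative at every real point. -/
def Nonneg {n : ℕ} (f : MvPolynomial (Fin n) ℝ) : Prop :=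
  ∀ x : Fin n → ℝ, 0 ≤ eval x f

/-- The restriction of `f` to a face `F` of its Newton polytope: the sum of those terms of `f`
whose exponents lie in `F`. -/
def restrictTo {n : ℕ} (f : MvPolynomial (Fin n) ℝ) (F : Set (Fin n → ℝ)) :
    MvPolynomial (Fin n) ℝ :=
  ∑ a ∈ f.support, if toR a ∈ F then monomial a (f.coeff a) else 0

/-
Every term of `f` other than the one at `β` has an even exponent and a positive coefficient, so
it is nonnegative; as `β ∈ F`, nonnegativity of the restriction to `F` gives that of `f`.
Conversely, `F` contains the face of `New(f)` cut out by a linear functional `l` that is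
maximised over `supp f` at `β`. Substituting `x_j ↦ t^{l(e_j)} x_j` multiplies `x^a` by
`t^{l(a)}`, so `t^{-l(β)} f(t^l x) ≥ 0` tends to the restriction of `f` to that exposed face
as `t → ∞`; the terms of `f` on `F` off that face are again nonnegative.

The functional `l` comes from Hahn–Banach: on the finite set `A` of exponents take nonnegative
weights `w` with `∑ w a • (a - β) = 0` of maximal support `P` (so `P ⊆ F`, by extremality) and
separate `conv (A \ P)` from `β + span (P - β)`; a common point would give such weights of
larger support.
-/

open Finset Filter Topology

section BalancingWeight

variable {E : Type*} [AddCommGroup E] [Module ℝ E]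

def IsBalancingWeight (A : Finset E) (β : E) (w : E → ℝ) : Prop :=
  (∀ a ∈ A, 0 ≤ w a) ∧ ∑ a ∈ A, w a • (a - β) = 0

variable {A : Finset E} {β : E}

lemma IsBalancingWeight.sum {ι : Type*} (s : Finset ι) {w : ι → E → ℝ}
    (hw : ∀ i ∈ s, IsBalancingWeight A β (w i)) : IsBalancingWeight A β (∑ i ∈ s, w i) := by
  refine ⟨fun a ha => ?_, ?_⟩
  · rw [Finset.sum_apply]
    exact Finset.sum_nonneg fun i hi => (hw i hi).1 a ha
  · simp only [Finset.sum_apply, Finset.sum_smul]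
    rw [Finset.sum_comm]
    exact Finset.sum_eq_zero fun i hi => (hw i hi).2

lemma exists_isBalancingWeight_maximal_support (A : Finset E) (β : E) :
    ∃ w, IsBalancingWeight A β w ∧
      ∀ v, IsBalancingWeight A β v → ∀ a ∈ A, 0 < v a → 0 < w a := by
  have hchoice : ∀ a : E, ∃ v, IsBalancingWeight A β v ∧
      ((∃ v', IsBalancingWeight A β v' ∧ 0 < v' a) → 0 < v a) := by
    intro a
    by_cases h : ∃ v', IsBalancingWeight A β v' ∧ 0 < v' a
    · obtain ⟨v', hv', hpos⟩ := h
      exact ⟨v', hv', fun _ => hpos⟩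
    · exact ⟨0, ⟨fun _ _ => le_rfl, by simp⟩, fun h' => absurd h' h⟩
  choose v hv hpos using hchoice
  refine ⟨∑ a ∈ A, v a, IsBalancingWeight.sum A fun a _ => hv a, fun u hu a ha hua => ?_⟩
  rw [Finset.sum_apply]
  exact (hpos a ⟨u, hu, hua⟩).trans_le
    (Finset.single_le_sum (f := fun b => v b a) (fun b _ => (hv b).1 a ha) ha)

lemma IsBalancingWeight.mem_of_pos {w : E → ℝ} (hw : IsBalancingWeight A β w) {F : Set E}
    (hF : IsExtreme ℝ (convexHull ℝ (A : Set E)) F) (hβF : β ∈ F) {a : E} (ha : a ∈ A)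
    (hwa : 0 < w a) : a ∈ F := by
  set R := A.erase a
  set r := ∑ x ∈ R, w x
  have hR : ∀ x ∈ R, 0 ≤ w x := fun x hx => hw.1 x (Finset.mem_of_mem_erase hx)
  have hbal : w a • (a - β) + ∑ x ∈ R, w x • (x - β) = 0 := by
    rw [Finset.add_sum_erase A (fun x => w x • (x - β)) ha]
    exact hw.2
  rcases (Finset.sum_nonneg hR).eq_or_lt with hr | hr
  · have hzero : ∑ x ∈ R, w x • (x - β) = 0 := Finset.sum_eq_zero fun x hx => by
      rw [(Finset.sum_eq_zero_iff_of_nonneg hR).1 hr.symm x hx, zero_smul]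
    rw [hzero, add_zero, smul_eq_zero, sub_eq_zero] at hbal
    exact hbal.resolve_left hwa.ne' ▸ hβF
  · have hz : R.centerMass w id ∈ convexHull ℝ (A : Set E) :=
      Finset.centerMass_mem_convexHull R hR hr fun x hx => Finset.mem_of_mem_erase hx
    refine hF.left_mem_of_mem_openSegment (subset_convexHull ℝ _ ha) hz hβF ?_
    have hT : 0 < w a + r := by positivity
    have hcm : β = (insert a R).centerMass w id := by
      have key : w a • a + ∑ x ∈ R, w x • x = (w a + r) • β := by
        rw [← sub_eq_zero, ← hbal]
        simp only [smul_sub, Finset.sum_sub_distrib, ← Finset.sum_smul, r]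
        module
      rw [Finset.centerMass, Finset.sum_insert (Finset.notMem_erase a A),
        Finset.sum_insert (Finset.notMem_erase a A)]
      simp only [id]
      rw [key, inv_smul_smul₀ hT.ne']
    rw [hcm, Finset.centerMass_insert (ha := Finset.notMem_erase a A) (hw := hr.ne')]
    exact ⟨_, _, div_pos hwa hT, div_pos hr hT, by rw [← add_div, div_self hT.ne'], rfl⟩

lemma IsBalancingWeight.sum_filter_pos {w : E → ℝ} (hw : IsBalancingWeight A β w) :
    ∑ a ∈ A.filter (0 < w ·), w a • (a - β) = 0 := by
  rw [Finset.sum_filter_of_ne fun a ha h => (hw.1 a ha).lt_of_ne' (left_ne_zero_of_smul h)]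
  exact hw.2

lemma disjoint_convexHull_of_isBalancingWeight_maximal_support {w : E → ℝ}
    (hw : IsBalancingWeight A β w)
    (hmax : ∀ v, IsBalancingWeight A β v → ∀ a ∈ A, 0 < v a → 0 < w a) :
    Disjoint (convexHull ℝ (A.filter (¬ 0 < w ·) : Set E))
      {x | x - β ∈ Submodule.span ℝ ((· - β) '' (A.filter (0 < w ·) : Set E))} := by
  rw [Set.disjoint_left]
  intro y hyZ hyV
  obtain ⟨μ, hμ0, hμ1, hμy⟩ := Finset.mem_convexHull'.1 hyZ
  obtain ⟨ν, hνy⟩ := (Submodule.mem_span_image_finset_iff_exists_fun' ℝ).1 hyV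
  obtain ⟨M, hM⟩ : ∃ M : ℝ, ∀ a ∈ A.filter (0 < w ·), ν a < M * w a :=
    ((Filter.eventually_all_finset _).2 fun a ha =>
      (tendsto_id.atTop_mul_const (Finset.mem_filter.1 ha).2).eventually_gt_atTop (ν a)).exists
  set v : E → ℝ := fun a => if 0 < w a then M * w a - ν a else μ a
  have hv : IsBalancingWeight A β v := by
    refine ⟨fun a ha => ?_, ?_⟩
    · by_cases hwa : 0 < w a
      · simpa [v, hwa] using (hM a (Finset.mem_filter.2 ⟨ha, hwa⟩)).le
      · simpa [v, hwa] using hμ0 a (Finset.mem_filter.2 ⟨ha, hwa⟩)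
    · have hZ : ∑ a ∈ A.filter (¬ 0 < w ·), μ a • (a - β) = y - β := by
        simp only [smul_sub, Finset.sum_sub_distrib, ← Finset.sum_smul, hμ1, hμy, one_smul]
      simp only [v, ite_smul, Finset.sum_ite, sub_smul, Finset.sum_sub_distrib, mul_smul,
        ← Finset.smul_sum, hw.sum_filter_pos, hνy, hZ, smul_zero]
      abel
  obtain ⟨z, hzZ, hμz⟩ : ∃ z ∈ A.filter (¬ 0 < w ·), 0 < μ z :=
    Finset.exists_lt_of_sum_lt (by rw [hμ1, Finset.sum_const_zero]; exact one_pos)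
  obtain ⟨hzA, hwz⟩ := Finset.mem_filter.1 hzZ
  exact hwz (hmax v hv z hzA (by simpa [v, hwz] using hμz))

end BalancingWeight

lemma LinearMap.eq_zero_of_forall_lt_map_add {E : Type*} [AddCommGroup E] [Module ℝ E]
    (l : E →ₗ[ℝ] ℝ) {V : Submodule ℝ E} {β : E} {c : ℝ} (h : ∀ x ∈ V, c < l (β + x))
    {y : E} (hy : y ∈ V) : l y = 0 := by
  by_contra hly
  have := h (((c - l β) / l y) • y) (V.smul_mem _ hy)
  rw [map_add, map_smul, smul_eq_mul, div_mul_cancel₀ _ hly] at this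
  linarith

theorem IsExtreme.exists_forall_le_and_eq_imp_mem {E : Type*} [NormedAddCommGroup E]
    [NormedSpace ℝ E] {A : Finset E} {F : Set E} (hF : IsExtreme ℝ (convexHull ℝ (A : Set E)) F)
    {β : E} (hβF : β ∈ F) :
    ∃ l : StrongDual ℝ E, ∀ a ∈ A, l a ≤ l β ∧ (l a = l β → a ∈ F) := by
  obtain ⟨w, hw, hmax⟩ := exists_isBalancingWeight_maximal_support A β
  set V := Submodule.span ℝ ((· - β) '' (A.filter (0 < w ·) : Set E))
  have hVclosed : IsClosed {x | x - β ∈ V} := by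
    have : FiniteDimensional ℝ V :=
      FiniteDimensional.span_of_finite ℝ ((A.filter (0 < w ·)).finite_toSet.image _)
    exact V.closed_of_finiteDimensional.preimage (continuous_id.sub continuous_const)
  have hVconvex : Convex ℝ {x | x - β ∈ V} := by
    have := (Submodule.convex V).translate_preimage_left (-β)
    simp only [← sub_eq_add_neg] at this
    exact this
  obtain ⟨l, u, c, hlu, huc, hcl⟩ := geometric_hahn_banach_compact_closed (convex_convexHull ℝ _)
    ((A.filter (¬ 0 < w ·)).finite_toSet.isCompact_convexHull ℝ) hVconvex hVclosed
    (disjoint_convexHull_of_isBalancingWeight_maximal_support hw hmax)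
  have hlV : ∀ y ∈ V, l y = 0 := fun y hy =>
    (l : E →ₗ[ℝ] ℝ).eq_zero_of_forall_lt_map_add (β := β)
      (fun x hx => hcl _ (by simpa using hx)) hy
  have hcβ : c < l β := hcl β (by simp)
  refine ⟨l, fun a ha => ?_⟩
  by_cases hwa : 0 < w a
  · have hla : l a = l β := by
      rw [← sub_eq_zero, ← map_sub]
      exact hlV _ (Submodule.subset_span ⟨a, Finset.mem_filter.2 ⟨ha, hwa⟩, rfl⟩)
    exact ⟨hla.le, fun _ => hw.mem_of_pos hF hβF ha hwa⟩
  · have hla : l a < l β :=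
      (hlu a (subset_convexHull ℝ _ (Finset.mem_filter.2 ⟨ha, hwa⟩))).trans (huc.trans hcβ)
    exact ⟨hla.le, fun h => absurd h hla.ne⟩

lemma eval_monomial_eq_prod {n : ℕ} (x : Fin n → ℝ) (a : Fin n →₀ ℕ) (c : ℝ) :
    eval x (monomial a c) = c * ∏ j, x j ^ a j := by
  rw [eval_monomial, Finsupp.prod_fintype _ _ fun j => pow_zero _]

lemma eval_monomial_nonneg {n : ℕ} {a : Fin n →₀ ℕ} (ha : IsEvenPt a) {c : ℝ} (hc : 0 ≤ c)
    (x : Fin n → ℝ) : 0 ≤ eval x (monomial a c) := by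
  rw [eval_monomial_eq_prod]
  exact mul_nonneg hc (Finset.prod_nonneg fun j _ => (ha j).pow_nonneg _)

lemma nonneg_add {n : ℕ} {f g : MvPolynomial (Fin n) ℝ} (hf : Nonneg f) (hg : Nonneg g) :
    Nonneg (f + g) := fun x => by
  rw [map_add]
  exact add_nonneg (hf x) (hg x)

lemma restrictTo_univ {n : ℕ} (f : MvPolynomial (Fin n) ℝ) : restrictTo f Set.univ = f := by
  simp only [restrictTo, Set.mem_univ, if_true]
  exact f.as_sum.symm

lemma restrictTo_add_restrictTo_diff {n : ℕ} {f : MvPolynomial (Fin n) ℝ}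
    {S T : Set (Fin n → ℝ)} (hST : ∀ a ∈ f.support, toR a ∈ S → toR a ∈ T) :
    restrictTo f S + restrictTo f (T \ S) = restrictTo f T := by
  rw [restrictTo, restrictTo, restrictTo, ← Finset.sum_add_distrib]
  refine Finset.sum_congr rfl fun a ha => ?_
  by_cases hS : toR a ∈ S <;> simp [hS, hST a ha]

lemma nonneg_restrictTo_of_coeff_nonneg {n : ℕ} {f : MvPolynomial (Fin n) ℝ}
    {S : Set (Fin n → ℝ)} (h : ∀ a ∈ f.support, toR a ∈ S → 0 ≤ f.coeff a ∧ IsEvenPt a) :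
    Nonneg (restrictTo f S) := fun x => by
  rw [restrictTo, map_sum]
  refine Finset.sum_nonneg fun a ha => ?_
  split_ifs with haS
  · exact eval_monomial_nonneg (h a ha haS).2 (h a ha haS).1 x
  · simp

lemma tendsto_rpow_atTop_of_nonpos {r : ℝ} (hr : r ≤ 0) :
    Tendsto (fun t : ℝ => t ^ r) atTop (𝓝 (if r = 0 then 1 else 0)) := by
  split_ifs with h
  · simp [h]
  · simpa using tendsto_rpow_neg_atTop (y := -r) (by linarith [hr.lt_of_ne h])

lemma map_toR_eq_sum {n : ℕ} (l : (Fin n → ℝ) →ₗ[ℝ] ℝ) (a : Fin n →₀ ℕ) :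
    l (toR a) = ∑ j, l (Pi.single j 1) * a j := by
  rw [l.pi_apply_eq_sum_univ]
  refine Finset.sum_congr rfl fun j _ => ?_
  rw [smul_eq_mul, mul_comm, toR]
  congr 2
  ext k
  simp [Pi.single_apply, eq_comm]

lemma eval_rpow_mul_monomial {n : ℕ} (l : (Fin n → ℝ) →ₗ[ℝ] ℝ) {t : ℝ} (ht : 0 < t)
    (x : Fin n → ℝ) (a : Fin n →₀ ℕ) (c : ℝ) :
    eval (fun j => t ^ l (Pi.single j 1) * x j) (monomial a c)
      = t ^ l (toR a) * eval x (monomial a c) := by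
  simp only [eval_monomial_eq_prod, mul_pow, Finset.prod_mul_distrib, map_toR_eq_sum,
    Real.rpow_sum_of_pos ht, ← Real.rpow_natCast, ← Real.rpow_mul ht.le]
  ring

lemma Nonneg.restrictTo_of_forall_le {n : ℕ} {f : MvPolynomial (Fin n) ℝ} (hf : Nonneg f)
    (l : (Fin n → ℝ) →ₗ[ℝ] ℝ) {b : ℝ} (hb : ∀ a ∈ f.support, l (toR a) ≤ b) :
    Nonneg (restrictTo f {y | l y = b}) := by
  intro x
  have hlim : Tendsto (fun t : ℝ => t ^ (-b) * eval (fun j => t ^ l (Pi.single j 1) * x j) f)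
      atTop (𝓝 (eval x (restrictTo f {y | l y = b}))) := by
    have hterm : ∀ a ∈ f.support, Tendsto (fun t : ℝ => t ^ (l (toR a) - b) *
        eval x (monomial a (f.coeff a))) atTop
        (𝓝 (eval x (if toR a ∈ {y | l y = b} then monomial a (f.coeff a) else 0))) := by
      intro a ha
      convert (tendsto_rpow_atTop_of_nonpos (sub_nonpos.2 (hb a ha))).mul_const _ using 2
      simp only [Set.mem_ofPred_eq, sub_eq_zero]
      split_ifs <;> simp
    rw [restrictTo, map_sum]
    refine (tendsto_finsetSum _ hterm).congr' ?_
    filter_upwards [eventually_gt_atTop 0] with t ht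
    conv_rhs => rw [f.as_sum, map_sum, Finset.mul_sum]
    refine Finset.sum_congr rfl fun a _ => ?_
    rw [eval_rpow_mul_monomial l ht, ← mul_assoc, ← Real.rpow_add ht, sub_eq_neg_add]
  refine ge_of_tendsto hlim ?_
  filter_upwards [eventually_gt_atTop 0] with t ht
  exact mul_nonneg (Real.rpow_nonneg ht.le _) (hf _)

lemma coeff_nonneg_and_isEvenPt {n : ℕ} {ι : Type*} [Fintype ι] {c : ι → ℝ}
    {α : ι → (Fin n →₀ ℕ)} (hα : ∀ i, IsEvenPt (α i)) (hc : ∀ i, 0 ≤ c i) (β : Fin n →₀ ℕ)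
    (d : ℝ) {a : Fin n →₀ ℕ} (ha : a ∈ ((∑ i, monomial (α i) (c i)) - monomial β d).support)
    (haβ : a ≠ β) :
    0 ≤ ((∑ i, monomial (α i) (c i)) - monomial β d).coeff a ∧ IsEvenPt a := by
  have hcoeff : ((∑ i, monomial (α i) (c i)) - monomial β d).coeff a
      = ∑ i, if α i = a then c i else 0 := by
    simp [coeff_sum, coeff_monomial, Ne.symm haβ]
  rw [mem_support_iff, hcoeff] at ha
  obtain ⟨i, -, hi⟩ := Finset.exists_ne_zero_of_sum_ne_zero ha
  have hαi : α i = a := by by_contra h; simp [h] at hi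
  exact ⟨hcoeff ▸ Finset.sum_nonneg fun i _ => by split_ifs <;> simp [hc i], hαi ▸ hα i⟩

theorem stmt0_general {n m : ℕ} (c : Fin m → ℝ) (α : Fin m → (Fin n →₀ ℕ)) (β : Fin n →₀ ℕ) (d : ℝ)
    (hα : ∀ i, IsEvenPt (α i)) (hc : ∀ i, 0 < c i)
    (f : MvPolynomial (Fin n) ℝ)
    (hf : f = (∑ i, monomial (α i) (c i)) - monomial β d)
    (F : Set (Fin n → ℝ)) (hF : IsExtreme ℝ (newton f) F) (hβF : toR β ∈ F) :
    Nonneg f ↔ Nonneg (restrictTo f F) := by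
  have hterms : ∀ S : Set (Fin n → ℝ), toR β ∉ S → Nonneg (restrictTo f S) := by
    intro S hβS
    refine nonneg_restrictTo_of_coeff_nonneg fun a ha haS => ?_
    subst hf
    exact coeff_nonneg_and_isEvenPt hα (fun i => (hc i).le) β d ha (by rintro rfl; exact hβS haS)
  rw [newton, ← Finset.coe_image] at hF
  obtain ⟨l, hl⟩ := hF.exists_forall_le_and_eq_imp_mem hβF
  constructor
  · intro hfnn
    rw [← restrictTo_add_restrictTo_diff (S := {y | l y = l (toR β)})
      fun a ha => (hl _ (Finset.mem_image_of_mem toR ha)).2]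
    exact nonneg_add (hfnn.restrictTo_of_forall_le (l : (Fin n → ℝ) →ₗ[ℝ] ℝ)
      fun a ha => (hl _ (Finset.mem_image_of_mem toR ha)).1) (hterms _ fun h => h.2 rfl)
  · intro hfF
    rw [← restrictTo_univ f, ← restrictTo_add_restrictTo_diff fun _ _ _ => Set.mem_univ _]
    exact nonneg_add hfF (hterms _ fun h => h.2 hβF)

/-- If `f_d = ∑ c_i x^{α_i} − d x^β` with even `α_i`, `c_i > 0`, and `β` on the
boundary of the Newton polytope of `f_d`, and `F` is a face of `New(f_d)` containing `β`, then
`f_d` is nonnegative iff its restriction to `F` is nonnegative. -/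
theorem stmt0 {n m : ℕ} (c : Fin m → ℝ) (α : Fin m → (Fin n →₀ ℕ)) (β : Fin n →₀ ℕ) (d : ℝ)
    (hα : ∀ i, IsEvenPt (α i)) (hc : ∀ i, 0 < c i)
    (f : MvPolynomial (Fin n) ℝ)
    (hf : f = (∑ i, monomial (α i) (c i)) - monomial β d)
    (hβ : toR β ∈ frontier (newton f))
    (F : Set (Fin n → ℝ)) (hF : IsExtreme ℝ (newton f) F) (hβF : toR β ∈ F) :
    Nonneg f ↔ Nonneg (restrictTo f F) :=
  stmt0_general c α β d hα hc f hf F hF hβF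
end
end

section
/- Consider the system of equations on the variables (x, d) ∈ ℝ_+^n × ℝ: Σ_{i=1}^m c_i x^{α_i} − d·x^β = 0 and Σ_{i=1}^m c_i α_i x^{α_i} − d·β·x^β = 0 (the second being an equality of vectors in ℝ^n), where α_i ∈ ℝ^n, c_i > 0 for i = 1,…,m, β lies in the interior of conv({α_1,…,α_m}), and dim(conv({α_1,…,α_m})) = n. Then this system has exactly one solution in ℝ_+^{n+1} (i.e. with all coordinates of x positive and d > 0). -/
/-!
Substituting `x = exp y`, the system says exactly that `d = F y` and `∇F y = 0` for
`F y = ∑ i, c i * exp ⟪α i - β, y⟫`. Since `β` is interior to the hull, every direction `w`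
has some `⟪α i - β, w⟫ ≥ ε ‖w‖`, so `F` grows exponentially at infinity and attains its
minimum, which is a critical point. `F` is strictly convex along every line (the vectors
`α i - β` span), so its gradient is injective and the critical point is unique.
-/

open Real Filter Matrix

section ExpSum

variable {ι κ : Type*} [Fintype ι] [Fintype κ] {c : ι → ℝ} {v : ι → κ → ℝ}

noncomputable def expSum (c : ι → ℝ) (v : ι → κ → ℝ) (y : κ → ℝ) : ℝ :=
  ∑ i, c i * exp (v i ⬝ᵥ y)

noncomputable def expSumGrad (c : ι → ℝ) (v : ι → κ → ℝ) (y : κ → ℝ) : κ → ℝ :=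
  ∑ i, (c i * exp (v i ⬝ᵥ y)) • v i

lemma expSum_pos [Nonempty ι] (hc : ∀ i, 0 < c i) (y : κ → ℝ) : 0 < expSum c v y :=
  Finset.sum_pos (fun i _ => mul_pos (hc i) (exp_pos _)) Finset.univ_nonempty

lemma continuous_expSum : Continuous (expSum c v) := by
  unfold expSum
  fun_prop

lemma hasDerivAt_expSum_add_smul (y w : κ → ℝ) :
    HasDerivAt (fun t : ℝ => expSum c v (y + t • w)) (expSumGrad c v y ⬝ᵥ w) 0 := by
  have hline : ∀ i, HasDerivAt (fun t : ℝ => c i * exp (v i ⬝ᵥ (y + t • w)))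
      (c i * exp (v i ⬝ᵥ y) * (v i ⬝ᵥ w)) 0 := fun i => by
    have hlin : HasDerivAt (fun t : ℝ => v i ⬝ᵥ y + t * (v i ⬝ᵥ w)) (v i ⬝ᵥ w) 0 := by
      simpa using ((hasDerivAt_id (0 : ℝ)).mul_const (v i ⬝ᵥ w)).const_add (v i ⬝ᵥ y)
    simpa [dotProduct_add, dotProduct_smul, mul_assoc] using (hlin.exp.const_mul (c i))
  simpa [expSum, expSumGrad, sum_dotProduct, smul_dotProduct] using
    HasDerivAt.fun_sum fun i _ => hline i

lemma expSumGrad_eq_zero_of_forall_le {y : κ → ℝ} (hy : ∀ z, expSum c v y ≤ expSum c v z) :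
    expSumGrad c v y = 0 := by
  have hmin : IsLocalMin (fun t : ℝ => expSum c v (y + t • expSumGrad c v y)) 0 :=
    Eventually.of_forall fun t => by simpa using hy _
  exact dotProduct_self_eq_zero.1 (hmin.hasDerivAt_eq_zero (hasDerivAt_expSum_add_smul y _))

lemma tendsto_expSum_cocompact (hc : ∀ i, 0 < c i)
    (hv : ∃ ε > 0, ∀ w, ∃ i, ε * ‖w‖ ≤ v i ⬝ᵥ w) :
    Tendsto (expSum c v) (cocompact (κ → ℝ)) atTop := by
  obtain ⟨ε, hε, hv⟩ := hv
  have : Nonempty ι := ⟨(hv 0).choose⟩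
  obtain ⟨i₀, hi₀⟩ := Finite.exists_min c
  refine tendsto_atTop_mono (fun y => ?_)
    (tendsto_norm_cocompact_atTop.const_mul_atTop (mul_pos (hc i₀) hε))
  obtain ⟨i, hi⟩ := hv y
  calc c i₀ * ε * ‖y‖ ≤ c i₀ * exp (ε * ‖y‖) := by
        rw [mul_assoc]
        exact mul_le_mul_of_nonneg_left (by linarith [add_one_le_exp (ε * ‖y‖)]) (hc i₀).le
    _ ≤ c i * exp (v i ⬝ᵥ y) := mul_le_mul (hi₀ i) (exp_le_exp.2 hi) (exp_pos _).le (hc i).le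
    _ ≤ expSum c v y :=
        Finset.single_le_sum (f := fun i => c i * exp (v i ⬝ᵥ y))
          (fun i _ => (mul_pos (hc i) (exp_pos _)).le) (Finset.mem_univ i)

lemma exists_expSumGrad_eq_zero (hc : ∀ i, 0 < c i)
    (hv : ∃ ε > 0, ∀ w, ∃ i, ε * ‖w‖ ≤ v i ⬝ᵥ w) : ∃ y, expSumGrad c v y = 0 :=
  let ⟨y, hy⟩ := continuous_expSum.exists_forall_le (tendsto_expSum_cocompact hc hv)
  ⟨y, expSumGrad_eq_zero_of_forall_le hy⟩

lemma exp_sub_exp_mul_sub_pos {a b : ℝ} (h : a ≠ b) : 0 < (exp a - exp b) * (a - b) := by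
  rcases h.lt_or_gt with h | h
  · exact mul_pos_of_neg_of_neg (sub_neg.2 (exp_lt_exp.2 h)) (sub_neg.2 h)
  · exact mul_pos (sub_pos.2 (exp_lt_exp.2 h)) (sub_pos.2 h)

lemma expSumGrad_sub_dotProduct (y z : κ → ℝ) :
    (expSumGrad c v y - expSumGrad c v z) ⬝ᵥ (y - z) =
      ∑ i, c i * ((exp (v i ⬝ᵥ y) - exp (v i ⬝ᵥ z)) * (v i ⬝ᵥ y - v i ⬝ᵥ z)) := by
  simp only [expSumGrad, ← Finset.sum_sub_distrib, sum_dotProduct, ← sub_smul, smul_dotProduct,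
    dotProduct_sub, smul_eq_mul]
  exact Finset.sum_congr rfl fun i _ => by ring

lemma expSumGrad_injective (hc : ∀ i, 0 < c i) (hv : ∀ w ≠ 0, ∃ i, v i ⬝ᵥ w ≠ 0) :
    Function.Injective (expSumGrad c v) := by
  intro y z hyz
  by_contra hne
  obtain ⟨i, hi⟩ := hv (y - z) (sub_ne_zero.2 hne)
  have hpos (i : ι) (hi : v i ⬝ᵥ y ≠ v i ⬝ᵥ z) :
      0 < c i * ((exp (v i ⬝ᵥ y) - exp (v i ⬝ᵥ z)) * (v i ⬝ᵥ y - v i ⬝ᵥ z)) :=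
    mul_pos (hc i) (exp_sub_exp_mul_sub_pos hi)
  have hsum := expSumGrad_sub_dotProduct (c := c) (v := v) y z
  rw [hyz, sub_self, zero_dotProduct] at hsum
  refine hsum.not_lt (Finset.sum_pos' (fun j _ => ?_) ⟨i, Finset.mem_univ i, hpos i ?_⟩)
  · by_cases hj : v j ⬝ᵥ y = v j ⬝ᵥ z
    · simp [hj]
    · exact (hpos j hj).le
  · rwa [dotProduct_sub, sub_ne_zero] at hi

end ExpSum

lemma pi_norm_le_sum_abs {κ : Type*} [Fintype κ] (w : κ → ℝ) : ‖w‖ ≤ ∑ j, |w j| :=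
  (pi_norm_le_iff_of_nonneg (by positivity)).2 fun j =>
    Finset.single_le_sum (f := fun j => |w j|) (fun j _ => abs_nonneg (w j)) (Finset.mem_univ j)

lemma exists_mul_norm_le_sub_dotProduct_of_mem_interior_convexHull {ι κ : Type*} [Fintype κ]
    {α : ι → κ → ℝ} {β : κ → ℝ} (hβ : β ∈ interior (convexHull ℝ (Set.range α))) :
    ∃ ε > 0, ∀ w, ∃ i, ε * ‖w‖ ≤ (α i - β) ⬝ᵥ w := by
  obtain ⟨ε, hε, hball⟩ := Metric.nhds_basis_closedBall.mem_iff.1 (mem_interior_iff_mem_nhds.1 hβ)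
  refine ⟨ε, hε, fun w => ?_⟩
  set u : κ → ℝ := ε • fun j => (SignType.sign (w j) : ℝ)
  have hu : β + u ∈ convexHull ℝ (Set.range α) := by
    refine hball (by
      rw [Metric.mem_closedBall, dist_eq_norm, add_sub_cancel_left, norm_smul,
        Real.norm_of_nonneg hε.le]
      refine mul_le_of_le_one_right hε.le ((pi_norm_le_iff_of_nonneg zero_le_one).2 fun j => ?_)
      rcases SignType.sign (w j) with _ | _ | _ <;> simp)
  -- a linear functional is maximised over the hull at one of the points `α i`
  obtain ⟨_, ⟨i, rfl⟩, hi⟩ := ((dotProductBilin ℝ ℝ w).convexOn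
    (convex_convexHull ℝ _)).exists_ge_of_mem_convexHull (subset_convexHull ℝ _) hu
  refine ⟨i, ?_⟩
  have hwu : w ⬝ᵥ u = ε * ∑ j, |w j| := by
    rw [dotProduct_smul, smul_eq_mul]
    exact congrArg _ (Finset.sum_congr rfl fun j _ => by rw [mul_comm, sign_mul_self])
  simp only [dotProductBilin_apply_apply, dotProduct_add] at hi
  rw [sub_dotProduct, dotProduct_comm (α i), dotProduct_comm β]
  nlinarith [pi_norm_le_sum_abs w]

lemma prod_rpow_eq_exp_dotProduct {κ : Type*} [Fintype κ] {x : κ → ℝ} (hx : ∀ j, 0 < x j)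
    (a : κ → ℝ) : ∏ j, x j ^ a j = exp (a ⬝ᵥ (log ∘ x)) := by
  simp only [dotProduct, exp_sum, Function.comp_apply]
  exact Finset.prod_congr rfl fun j _ => by rw [rpow_def_of_pos (hx j), mul_comm]

lemma expSumGrad_sub {ι κ : Type*} [Fintype ι] [Fintype κ] (c : ι → ℝ) (α : ι → κ → ℝ)
    (β y : κ → ℝ) :
    expSumGrad c (fun i => α i - β) y =
      (∑ i, (c i * exp ((α i - β) ⬝ᵥ y)) • α i) - expSum c (fun i => α i - β) y • β := by
  simp only [expSumGrad, expSum, smul_sub, Finset.sum_sub_distrib, Finset.sum_smul]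

lemma exp_dotProduct_eq_mul {κ : Type*} [Fintype κ] (a β y : κ → ℝ) :
    exp (a ⬝ᵥ y) = exp ((a - β) ⬝ᵥ y) * exp (β ⬝ᵥ y) := by
  rw [← exp_add, sub_dotProduct, sub_add_cancel]

lemma prod_rpow_system_iff {ι κ : Type*} [Fintype ι] [Fintype κ] {c : ι → ℝ} {α : ι → κ → ℝ}
    {β x : κ → ℝ} {d : ℝ} (hx : ∀ j, 0 < x j) :
    ((∑ i, c i * ∏ j, x j ^ α i j) - d * ∏ j, x j ^ β j = 0 ∧
      (∑ i, (c i * ∏ j, x j ^ α i j) • α i) - (d * ∏ j, x j ^ β j) • β = 0) ↔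
      d = expSum c (fun i => α i - β) (log ∘ x) ∧
        expSumGrad c (fun i => α i - β) (log ∘ x) = 0 := by
  simp only [prod_rpow_eq_exp_dotProduct hx, expSumGrad_sub]
  generalize log ∘ x = y
  have hE : exp (β ⬝ᵥ y) ≠ 0 := (exp_pos _).ne'
  have hsum : ∑ i, c i * exp (α i ⬝ᵥ y) = expSum c (fun i => α i - β) y * exp (β ⬝ᵥ y) := by
    simp only [expSum, Finset.sum_mul, mul_assoc]
    exact Finset.sum_congr rfl fun i _ => by rw [exp_dotProduct_eq_mul _ β]
  have hvec : ∑ i, (c i * exp (α i ⬝ᵥ y)) • α i =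
      exp (β ⬝ᵥ y) • ∑ i, (c i * exp ((α i - β) ⬝ᵥ y)) • α i := by
    simp only [Finset.smul_sum, smul_smul]
    exact Finset.sum_congr rfl fun i _ => by rw [exp_dotProduct_eq_mul _ β]; ring_nf
  rw [hsum, hvec, ← sub_mul, mul_eq_zero, or_iff_left hE, sub_eq_zero, mul_comm d, ← smul_smul,
    ← smul_sub, smul_eq_zero, or_iff_right hE, eq_comm]
  exact and_congr_right fun hd => by rw [hd]

theorem stmt1_general {n m : ℕ} (c : Fin m → ℝ) (α : Fin m → (Fin n → ℝ)) (β : Fin n → ℝ)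
    (hc : ∀ i, 0 < c i)
    (hβ : β ∈ interior (convexHull ℝ (Set.range α))) :
    ∃! p : (Fin n → ℝ) × ℝ,
      (∀ j, 0 < p.1 j) ∧ 0 < p.2 ∧
      (∑ i, c i * ∏ j, p.1 j ^ α i j) - p.2 * ∏ j, p.1 j ^ β j = 0 ∧
      (∑ i, (c i * ∏ j, p.1 j ^ α i j) • α i) - (p.2 * ∏ j, p.1 j ^ β j) • β = 0 := by
  obtain ⟨ε, hε, hmargin⟩ := exists_mul_norm_le_sub_dotProduct_of_mem_interior_convexHull hβ
  have : Nonempty (Fin m) := ⟨(hmargin 0).choose⟩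
  obtain ⟨y, hy⟩ := exists_expSumGrad_eq_zero hc ⟨ε, hε, hmargin⟩
  have hexp : ∀ j, 0 < (exp ∘ y) j := fun j => exp_pos (y j)
  have hlog : log ∘ exp ∘ y = y := funext fun j => log_exp (y j)
  refine ⟨(exp ∘ y, expSum c (fun i => α i - β) y),
    ⟨hexp, expSum_pos hc y, (prod_rpow_system_iff hexp).2 (by rw [hlog]; exact ⟨rfl, hy⟩)⟩, ?_⟩
  rintro ⟨x, d⟩ ⟨hx, -, hsys⟩
  dsimp only at hx hsys
  obtain ⟨rfl, hcrit⟩ := (prod_rpow_system_iff hx).1 hsys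
  have hspan (w : Fin n → ℝ) (hw : w ≠ 0) : ∃ i, (α i - β) ⬝ᵥ w ≠ 0 :=
    let ⟨i, hi⟩ := hmargin w
    ⟨i, (lt_of_lt_of_le (mul_pos hε (norm_pos_iff.2 hw)) hi).ne'⟩
  have hxy : log ∘ x = y := expSumGrad_injective hc hspan (hcrit.trans hy.symm)
  have hx_eq : x = exp ∘ y := by
    rw [← hxy]
    exact funext fun j => (exp_log (hx j)).symm
  rw [hxy, hx_eq]

/-- The system `∑ c_i x^{α_i} − d x^β = 0`,
`∑ c_i α_i x^{α_i} − d β x^β = 0` (with real exponents, `c_i > 0`, `β` in the interior of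
`conv{α_1,…,α_m}` and `dim conv{α_1,…,α_m} = n`) has exactly one solution `(x, d)` with all
coordinates of `x` positive and `d > 0`.  Here `x^α = ∏_j x_j^{α_j}` (real powers). -/
theorem stmt1 {n m : ℕ} (c : Fin m → ℝ) (α : Fin m → (Fin n → ℝ)) (β : Fin n → ℝ)
    (hc : ∀ i, 0 < c i)
    (hβ : β ∈ interior (convexHull ℝ (Set.range α)))
    (hdim : affineSpan ℝ (Set.range α) = ⊤) :
    ∃! p : (Fin n → ℝ) × ℝ,
      (∀ j, 0 < p.1 j) ∧ 0 < p.2 ∧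
      (∑ i, c i * ∏ j, p.1 j ^ α i j) - p.2 * ∏ j, p.1 j ^ β j = 0 ∧
      (∑ i, (c i * ∏ j, p.1 j ^ α i j) • α i) - (p.2 * ∏ j, p.1 j ^ β j) • β = 0 :=
  stmt1_general c α β hc hβ
end

section
/- Let X_1,…,X_r be a finite collection of convex subsets of ℝ^n with r > n + 1. If the intersection of every r − 1 of these sets is nonempty, then the intersection of all r sets is nonempty. -/
/-- If `X_1, …, X_r` are convex subsets of `ℝ^n` with `r > n + 1` and every
`r − 1` of them have a common point (i.e. for each `i`, the intersection of all `X_j` with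
`j ≠ i` is nonempty), then all `r` sets have a common point. -/
theorem stmt3 {n r : ℕ} (X : Fin r → Set (Fin n → ℝ))
    (hconv : ∀ i, Convex ℝ (X i))
    (hr : n + 1 < r)
    (h : ∀ i : Fin r, (⋂ j ∈ {j : Fin r | j ≠ i}, X j).Nonempty) :
    (⋂ i, X i).Nonempty := by
  have hfin : Module.finrank ℝ (Fin n → ℝ) = n := Module.finrank_fin_fun ℝ
  have := Convex.helly_theorem (𝕜 := ℝ) (F := X) (s := Finset.univ)
    (by simp [hfin]; omega) (fun i _ ↦ hconv i) ?_
  · simpa using this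
  · intro I _ hIcard
    have : I ≠ Finset.univ := by
      intro hI
      have := Finset.card_univ (α := Fin r)
      rw [hI, this, hfin] at hIcard
      simp at hIcard; omega
    obtain ⟨i, hi⟩ : ∃ i, i ∉ I := by
      by_contra hc; push_neg at hc
      exact this (Finset.eq_univ_iff_forall.2 hc)
    refine (h i).mono ?_
    intro x hx
    simp only [Set.mem_iInter] at hx ⊢
    intro j hj
    exact hx j (fun hji ↦ hi (hji ▸ hj))
end

section
/- The univariate polynomial f(x) = 1 + 4x² + x⁴ − 3x − 3x³ is nonnegative on ℝ, but f is not a SONC polynomial (it is not a finite sum of nonnegative circuit polynomials). -/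
/-!
Pair the coefficients of a univariate polynomial with a convex weight `φ` of their exponents.
A nonnegative circuit polynomial `∑ c_α x^α - d x^β` vanishing at `x = 1` has a double root
there, so `∑ c_α = d` and `∑ c_α α = d β`; Jensen's inequality then gives
`d φ(β) ≤ ∑ c_α φ(α)`, i.e. the pairing is nonnegative, as it is on monomial squares when
`φ ≥ 0`. Since `f(1) = 0`, every summand of a SONC decomposition of `f` vanishes at `1`, so
the pairing would be nonnegative on `f`; but for `φ(t) = |t - 2|` it equals
`2 + 0 + 2 - 3 - 3 = -2`.
-/

open MvPolynomial Classical

noncomputable section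

/-- A trellis: a finite set of even lattice points forming the vertex set of a simplex
(i.e. affinely independent). -/
def IsTrellis {n : ℕ} (A : Finset (Fin n →₀ ℕ)) : Prop :=
  (∀ a ∈ A, IsEvenPt a) ∧ AffineIndependent ℝ (fun a : {x // x ∈ A} => toR a.1)

/-- A circuit polynomial: `∑_{α ∈ A} c_α x^α − d x^β` where `A` is a trellis, `c_α > 0`,
and `β` lies in the (relative) interior of `conv(A)`. -/
def IsCircuit {n : ℕ} (f : MvPolynomial (Fin n) ℝ) : Prop :=
  ∃ (A : Finset (Fin n →₀ ℕ)) (c : (Fin n →₀ ℕ) → ℝ) (β : Fin n →₀ ℕ) (d : ℝ),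
    IsTrellis A ∧ (∀ a ∈ A, 0 < c a) ∧
    toR β ∈ intrinsicInterior ℝ (convexHull ℝ (toR '' (A : Set (Fin n →₀ ℕ)))) ∧
    f = (∑ a ∈ A, monomial a (c a)) - monomial β d

/-- A monomial square: `c x^α` with `c ≥ 0` and `α` even. -/
def IsMonomialSquare {n : ℕ} (f : MvPolynomial (Fin n) ℝ) : Prop :=
  ∃ (a : Fin n →₀ ℕ) (c : ℝ), IsEvenPt a ∧ 0 ≤ c ∧ f = monomial a c

/-- A nonnegative circuit polynomial (monomial squares are also counted as such). -/
def IsNonnegCircuit {n : ℕ} (f : MvPolynomial (Fin n) ℝ) : Prop :=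
  IsMonomialSquare f ∨ (IsCircuit f ∧ Nonneg f)

/-- A SONC polynomial: a finite sum of nonnegative circuit polynomials. -/
def IsSONC {n : ℕ} (f : MvPolynomial (Fin n) ℝ) : Prop :=
  ∃ (k : ℕ) (g : Fin k → MvPolynomial (Fin n) ℝ),
    (∀ i, IsNonnegCircuit (g i)) ∧ f = ∑ i, g i


lemma IsNonnegCircuit.nonneg {n : ℕ} {g : MvPolynomial (Fin n) ℝ} (hg : IsNonnegCircuit g) :
    Nonneg g := by
  rcases hg with ⟨a, c, ha, hc, rfl⟩ | ⟨-, hg⟩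
  · intro x
    rw [eval_monomial]
    exact mul_nonneg hc (Finset.prod_nonneg fun i _ => (ha i).pow_nonneg _)
  · exact hg

theorem ConvexOn.sum_mul_le_sum_mul {ι : Type*} {φ : ℝ → ℝ} (hφ : ConvexOn ℝ Set.univ φ)
    {s : Finset ι} {c p : ι → ℝ} (hc : ∀ i ∈ s, 0 ≤ c i) {x : ℝ}
    (hx : ∑ i ∈ s, c i * p i = (∑ i ∈ s, c i) * x) :
    (∑ i ∈ s, c i) * φ x ≤ ∑ i ∈ s, c i * φ (p i) := by
  rcases (Finset.sum_nonneg hc).eq_or_lt with hsum | hsum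
  · have hzero := (Finset.sum_eq_zero_iff_of_nonneg hc).mp hsum.symm
    rw [← hsum, zero_mul]
    exact (Finset.sum_eq_zero fun i hi => by rw [hzero i hi, zero_mul]).ge
  · have hcenter : s.centerMass c p = x := by
      simp only [Finset.centerMass, smul_eq_mul, hx]
      field_simp
    have hjensen := hφ.map_centerMass_le hc hsum fun i _ => Set.mem_univ (p i)
    rw [hcenter] at hjensen
    simp only [Finset.centerMass, Function.comp_apply, smul_eq_mul] at hjensen
    rwa [inv_mul_eq_div, le_div_iff₀' hsum] at hjensen

lemma eval_monomial_fin_one (x : Fin 1 → ℝ) (a : Fin 1 →₀ ℕ) (c : ℝ) :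
    eval x (monomial a c) = c * x 0 ^ a 0 := by
  rw [eval_monomial, Finsupp.prod_fintype _ _ fun _ => pow_zero _, Fin.prod_univ_one]

/-- `coeffMoment φ g = ∑ₐ coeff_a g * φ a`. -/
def coeffMoment (φ : ℝ → ℝ) : MvPolynomial (Fin 1) ℝ →ₗ[ℝ] ℝ :=
  Finsupp.linearCombination ℝ (fun a : Fin 1 →₀ ℕ => φ (a 0)) ∘ₗ
    (AddMonoidAlgebra.coeffLinearEquiv ℝ).toLinearMap

lemma coeffMoment_monomial (φ : ℝ → ℝ) (a : Fin 1 →₀ ℕ) (c : ℝ) :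
    coeffMoment φ (monomial a c) = c * φ (a 0) := by
  simp [coeffMoment, monomial]

lemma coeffMoment_C_mul_X_pow (φ : ℝ → ℝ) (c : ℝ) (k : ℕ) :
    coeffMoment φ (C c * X 0 ^ k) = c * φ k := by
  simp [C_mul_X_pow_eq_monomial, coeffMoment_monomial]

lemma eval_one_eq_coeffMoment_one (g : MvPolynomial (Fin 1) ℝ) :
    eval 1 g = coeffMoment (fun _ => 1) g := by
  induction g using MvPolynomial.induction_on' with
  | monomial a c => simp [eval_monomial_fin_one, coeffMoment_monomial]
  | add p q hp hq => rw [map_add, map_add, hp, hq]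

lemma hasDerivAt_eval_diagonal_one (g : MvPolynomial (Fin 1) ℝ) :
    HasDerivAt (fun t : ℝ => eval (fun _ => t) g) (coeffMoment id g) 1 := by
  induction g using MvPolynomial.induction_on' with
  | monomial a c =>
    simp only [eval_monomial_fin_one, coeffMoment_monomial]
    simpa using (hasDerivAt_pow (a 0) (1 : ℝ)).const_mul c
  | add p q hp hq => simpa only [map_add] using hp.fun_add hq

lemma coeffMoment_id_eq_zero {g : MvPolynomial (Fin 1) ℝ} (hg : Nonneg g) (h1 : eval 1 g = 0) :
    coeffMoment id g = 0 := by
  have hmin : IsLocalMin (fun t : ℝ => eval (fun _ => t) g) 1 :=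
    Filter.Eventually.of_forall fun t => h1.trans_le (hg _)
  exact hmin.hasDerivAt_eq_zero (hasDerivAt_eval_diagonal_one g)

section obstruction

variable {φ : ℝ → ℝ}

lemma coeffMoment_nonneg_of_isCircuit (hφ : ConvexOn ℝ Set.univ φ) {g : MvPolynomial (Fin 1) ℝ}
    (hc : IsCircuit g) (hg : Nonneg g) (h1 : eval 1 g = 0) : 0 ≤ coeffMoment φ g := by
  obtain ⟨A, c, β, d, -, hc, -, rfl⟩ := hc
  have hmoment : ∀ ψ : ℝ → ℝ, coeffMoment ψ ((∑ a ∈ A, monomial a (c a)) - monomial β d)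
      = ∑ a ∈ A, c a * ψ (a 0) - d * ψ (β 0) := by
    intro ψ
    simp only [map_sub, map_sum, coeffMoment_monomial]
  have hmass : ∑ a ∈ A, c a = d := by
    simpa [eval_one_eq_coeffMoment_one, hmoment, sub_eq_zero] using h1
  have hbary : ∑ a ∈ A, c a * (a 0 : ℝ) = (∑ a ∈ A, c a) * β 0 := by
    simpa [hmoment, sub_eq_zero, hmass] using coeffMoment_id_eq_zero hg h1
  rw [hmoment, sub_nonneg, ← hmass]
  exact hφ.sum_mul_le_sum_mul (fun a ha => (hc a ha).le) hbary

lemma coeffMoment_nonneg_of_isNonnegCircuit (hφ : ConvexOn ℝ Set.univ φ)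
    (hφ₀ : ∀ k : ℕ, Even k → 0 ≤ φ k) {g : MvPolynomial (Fin 1) ℝ} (hg : IsNonnegCircuit g)
    (h1 : eval 1 g = 0) : 0 ≤ coeffMoment φ g := by
  rcases hg with ⟨a, c, ha, hc, rfl⟩ | ⟨hc, hg⟩
  · rw [coeffMoment_monomial]
    exact mul_nonneg hc (hφ₀ _ (ha 0))
  · exact coeffMoment_nonneg_of_isCircuit hφ hc hg h1

theorem not_isSONC_of_coeffMoment_neg (hφ : ConvexOn ℝ Set.univ φ)
    (hφ₀ : ∀ k : ℕ, Even k → 0 ≤ φ k) {f : MvPolynomial (Fin 1) ℝ} (h1 : eval 1 f = 0)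
    (hf : coeffMoment φ f < 0) : ¬ IsSONC f := by
  rintro ⟨k, g, hg, rfl⟩
  rw [map_sum] at h1 hf
  have hg1 : ∀ i ∈ Finset.univ, eval 1 (g i) = 0 :=
    (Finset.sum_eq_zero_iff_of_nonneg fun i _ => (hg i).nonneg 1).mp h1
  refine hf.not_ge (Finset.sum_nonneg fun i hi => ?_)
  exact coeffMoment_nonneg_of_isNonnegCircuit hφ hφ₀ (hg i) (hg1 i hi)

end obstruction

/-- The univariate polynomial `f = 1 + 4x² + x⁴ − 3x − 3x³` is nonnegative on
`ℝ` but is not a SONC polynomial. -/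
theorem stmt15 (f : MvPolynomial (Fin 1) ℝ)
    (hf : f = 1 + 4 * X 0 ^ 2 + X 0 ^ 4 - 3 * X 0 - 3 * X 0 ^ 3) :
    Nonneg f ∧ ¬ IsSONC f := by
  have heval : ∀ x : Fin 1 → ℝ, eval x f = (x 0 - 1) ^ 2 * ((x 0 - 1 / 2) ^ 2 + 3 / 4) := by
    intro x
    simp only [hf, map_add, map_sub, map_mul, map_pow, map_one, map_ofNat, eval_X]
    ring
  refine ⟨fun x => heval x ▸ by positivity, ?_⟩
  have hmonomials :
      f = C 1 * X 0 ^ 0 + C 4 * X 0 ^ 2 + C 1 * X 0 ^ 4 - C 3 * X 0 ^ 1 - C 3 * X 0 ^ 3 := by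
    simp [hf, map_ofNat]
  refine not_isSONC_of_coeffMoment_neg (convexOn_univ_dist (2 : ℝ)) (fun _ _ => dist_nonneg)
    (by simpa using heval 1) ?_
  simp only [hmonomials, map_add, map_sub, coeffMoment_C_mul_X_pow, Real.dist_eq]
  norm_num
end
end
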